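/- Let a, b : ℤ → ℝ and let V : ℤ → ℝ³ satisfy V_{i+3} = a_i V_{i+2} + b_i V_{i+1} + V_i and det(V_i, V_{i+1}, V_{i+2}) = 1 for all i ∈ ℤ. Define U_i := V_i × V_{i+1}. Then for all i ∈ ℤ: det(U_i, U_{i+1}, U_{i+2}) = 1 and U_{i+3} = −b_{i+1} U_{i+2} − a_i U_{i+1} + U_i. (Thus the projective duality map α transforms the difference equation with coefficients (a_i, b_i) into the one with coefficients (−b_{i+1}, −a_i).) -/

import Mathlib

/-!
The vector triple product gives `(v × w) × (w × x) = det(v, w, x) w`, so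
`det(U_i, U_{i+1}, U_{i+2}) = det(V_i, V_{i+1}, V_{i+2}) · det(V_{i+1}, V_{i+2}, V_{i+3})`.
The recurrence for `U` comes from expanding `V_{i+3} × V_{i+4}` bilinearly, substituting the
recurrence for `V` twice; the terms with parallel factors vanish.
-/

/-- `det3 u v w` is the determinant of the 3×3 matrix with columns `u, v, w`
(equivalently, the determinant of the matrix with rows `u, v, w`). -/
noncomputable def det3 (u v w : Fin 3 → ℝ) : ℝ :=
  Matrix.det (Matrix.of ![u, v, w])

open Matrix

theorem det3_eq_dotProduct_cross (u v w : Fin 3 → ℝ) : det3 u v w = u ⬝ᵥ v ⨯₃ w :=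
  (triple_product_eq_det u v w).symm

theorem det3_cross_cross_cross (u v w x : Fin 3 → ℝ) :
    det3 (u ⨯₃ v) (v ⨯₃ w) (w ⨯₃ x) = det3 u v w * det3 v w x := by
  have hcross : v ⨯₃ w ⨯₃ (w ⨯₃ x) = det3 v w x • w := by
    rw [cross_cross_eq_smul_sub_smul', dot_cross_self, zero_smul, sub_zero,
      dotProduct_comm _ x, triple_product_permutation, det3_eq_dotProduct_cross]
  rw [det3_eq_dotProduct_cross, hcross, dotProduct_smul, smul_eq_mul, dotProduct_comm _ w,
    triple_product_permutation, ← det3_eq_dotProduct_cross u v w, mul_comm]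

theorem cross_eq_of_recurrence (a b a' b' : ℝ) (u v w x y : Fin 3 → ℝ)
    (hx : x = a • w + b • v + u) (hy : y = a' • x + b' • w + v) :
    x ⨯₃ y = -b' • (w ⨯₃ x) + -a • (v ⨯₃ w) + u ⨯₃ v := by
  have hxv : x ⨯₃ v = -a • (v ⨯₃ w) + u ⨯₃ v := by
    rw [hx]
    simp only [map_add, map_smul, LinearMap.add_apply, LinearMap.smul_apply, cross_self,
      smul_zero, add_zero, neg_smul]
    rw [← cross_anticomm v w, smul_neg]
  rw [hy]
  simp only [map_add, map_smul, cross_self, smul_zero, zero_add, hxv, neg_smul]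
  rw [← cross_anticomm w x, smul_neg, add_assoc]

theorem stmt_11 (a b : ℤ → ℝ) (V : ℤ → Fin 3 → ℝ)
    (hrec : ∀ i : ℤ, V (i + 3) = a i • V (i + 2) + b i • V (i + 1) + V i)
    (hdet : ∀ i : ℤ, det3 (V i) (V (i + 1)) (V (i + 2)) = 1)
    (U : ℤ → Fin 3 → ℝ)
    (hU : ∀ i : ℤ, U i = crossProduct (V i) (V (i + 1))) :
    ∀ i : ℤ,
      det3 (U i) (U (i + 1)) (U (i + 2)) = 1 ∧
      U (i + 3) = -b (i + 1) • U (i + 2) + -a i • U (i + 1) + U i := by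
  intro i
  have hdet' : det3 (V (i + 1)) (V (i + 2)) (V (i + 3)) = 1 := by
    simpa only [add_assoc, Int.reduceAdd] using hdet (i + 1)
  have hrec' : V (i + 4) = a (i + 1) • V (i + 3) + b (i + 1) • V (i + 2) + V (i + 1) := by
    simpa only [add_assoc, Int.reduceAdd] using hrec (i + 1)
  refine ⟨?_, ?_⟩ <;> simp only [hU, add_assoc, Int.reduceAdd]
  · rw [det3_cross_cross_cross, hdet i, hdet', one_mul]
  · rw [cross_eq_of_recurrence _ _ _ _ _ _ _ _ _ (hrec i) hrec', add_assoc]
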